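/- arXiv:1205.2841 — 2 statements merged into one kernel-verified Lean document; each statement's English description precedes it below -/
import Mathlib

section
/- A hedge automaton A = (Q, Σ, Q_f, Δ) is universal if and only if for every macrostate P ∈ MinPost*(∅) we have P ∩ Q_f ≠ ∅. -/
/-- Unranked trees over alphabet `σ`: a root label and a list of subtrees. -/
inductive UTree (σ : Type) : Type where
  | node : σ → List (UTree σ) → UTree σ

namespace UTree

/-- Linearization of an unranked tree, over `σ ⊕ σ` where `Sum.inl a` is the
opening tag `a` and `Sum.inr a` is the closing tag `ā`. -/
def lin {σ : Type} : UTree σ → List (σ ⊕ σ)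
  | .node a ts => Sum.inl a :: ((ts.attach.map fun x => lin x.1).flatten ++ [Sum.inr a])
decreasing_by simp only [UTree.node.sizeOf_spec]; have := List.sizeOf_lt_of_mem x.2; omega

/-- Height of a tree (number of nodes on the longest branch). -/
def height {σ : Type} : UTree σ → ℕ
  | .node _ ts => ((ts.attach.map fun x => height x.1).foldr max 0) + 1
decreasing_by simp only [UTree.node.sizeOf_spec]; have := List.sizeOf_lt_of_mem x.2; omega

end UTree

/-- Linearization of a hedge (a finite sequence of trees). -/
def linH {σ : Type} (h : List (UTree σ)) : List (σ ⊕ σ) := (h.map UTree.lin).flatten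

/-- `u` is a nonempty proper prefix of the linearization of some tree. -/
def ProperPrefix {σ : Type} (u : List (σ ⊕ σ)) : Prop :=
  ∃ (t : UTree σ) (v : List (σ ⊕ σ)), v ≠ [] ∧ u ++ v = t.lin

/-- A hedge automaton: final states and rules `(a, L, q)` with a horizontal
language `L ⊆ Q*`. -/
structure HedgeAutomaton (σ Q : Type) where
  final : Set Q
  rules : Set (σ × Set (List Q) × Q)

/-- `HEval A t q` holds iff some run of `A` on `t` labels the root of `t` by `q`. -/
inductive HEval {σ Q : Type} (A : HedgeAutomaton σ Q) : UTree σ → Q → Prop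
  | node {a : σ} {ts : List (UTree σ)} {q : Q} {L : Set (List Q)} {qs : List Q} :
      (a, L, q) ∈ A.rules → qs ∈ L → qs.length = ts.length →
      (∀ p ∈ ts.zip qs, HEval A p.1 p.2) → HEval A (UTree.node a ts) q

/-- A tree is accepted if some run labels its root by a final state. -/
def accepted {σ Q : Type} (A : HedgeAutomaton σ Q) (t : UTree σ) : Prop :=
  ∃ q ∈ A.final, HEval A t q

/-- All horizontal languages of `A` are regular. -/
def RegularHA {σ Q : Type} (A : HedgeAutomaton σ Q) : Prop :=
  ∀ r ∈ A.rules, Language.IsRegular (r.2.1 : Language Q)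

/-- The words `p₁⋯pₙ` of a macrostate word `P₁⋯Pₙ`, with `pᵢ ∈ Pᵢ` for all `i`. -/
def wordsOf {Q : Type} (π : List (Set Q)) : Set (List Q) :=
  {w | List.Forall₂ (· ∈ ·) w π}

/-- `Post_a(π)` for a macrostate word `π`. -/
def postA {σ Q : Type} (A : HedgeAutomaton σ Q) (a : σ) (π : List (Set Q)) : Set Q :=
  {q | ∃ L : Set (List Q), (a, L, q) ∈ A.rules ∧ (L ∩ wordsOf π).Nonempty}

/-- The macrostate `P_t = {q | t →A q}` of a tree `t`. -/
def Pt {σ Q : Type} (A : HedgeAutomaton σ Q) (t : UTree σ) : Set Q := {q | HEval A t q}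

/-- The macrostate word `π_h = P_{t₁}⋯P_{tₙ}` of a hedge `h = t₁⋯tₙ`. -/
def pih {σ Q : Type} (A : HedgeAutomaton σ Q) (h : List (UTree σ)) : List (Set Q) :=
  h.map (Pt A)

/-- `Post(M) = {Post_a(π) | a ∈ Σ, π ∈ M*} ∪ M`. -/
def postSet {σ Q : Type} (A : HedgeAutomaton σ Q) (M : Set (Set Q)) : Set (Set Q) :=
  {P | ∃ (a : σ) (π : List (Set Q)), (∀ x ∈ π, x ∈ M) ∧ P = postA A a π} ∪ M

/-- `⌊S⌋`: the `⊆`-minimal elements of a family of sets. -/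
def mins {α : Type} (S : Set (Set α)) : Set (Set α) :=
  {P ∈ S | ∀ P' ∈ S, P' ⊆ P → P' = P}

/-- `MinPost^i(M)`, with `MinPost^0(M) = ⌊M⌋` and
`MinPost^i(M) = ⌊Post(MinPost^{i-1}(M))⌋`. -/
def minPostIter {σ Q : Type} (A : HedgeAutomaton σ Q) : ℕ → Set (Set Q) → Set (Set Q)
  | 0, M => mins M
  | n + 1, M => mins (postSet A (minPostIter A n M))

/-- `MinPost*(M) = ⋃_{i ≥ 0} MinPost^i(M)`. -/
def minPostStar {σ Q : Type} (A : HedgeAutomaton σ Q) (M : Set (Set Q)) : Set (Set Q) :=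
  ⋃ i : ℕ, minPostIter A i M

/-- `A` is universal: it accepts every tree of `T(Σ)`. -/
def universal {σ Q : Type} (A : HedgeAutomaton σ Q) : Prop :=
  ∀ t : UTree σ, accepted A t

/-
The macrostate `P_t` of a tree `t` (the states a run can reach at its root) satisfies
`P_{a(t₁⋯tₙ)} = Post_a(P_{t₁}⋯P_{tₙ})`, and `Post_a` is monotone. Hence every member of
`MinPost*(∅)` contains `P_t` for some tree `t`. Conversely every `P_t` contains some member of
`MinPost*(∅)`: since `Q` is finite, any member of `Post(M)` lies above a minimal one, and as
`M ⊆ Post(M)` the level at which such a member is found can be raised at will, so all children of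
a node are covered at a common level. Universality says that every `P_t` meets `Q_f`, which by
the two inclusions is the same as every member of `MinPost*(∅)` meeting `Q_f`.
-/

theorem List.exists_forall₂_of_forall_exists {α β : Type*} {R : α → β → Prop} :
    ∀ {l : List α}, (∀ a ∈ l, ∃ b, R a b) → ∃ l', List.Forall₂ R l l'
  | [], _ => ⟨[], .nil⟩
  | a :: l, h => by
    obtain ⟨b, hb⟩ := h a mem_cons_self
    obtain ⟨l', hl'⟩ := exists_forall₂_of_forall_exists fun x hx => h x (mem_cons_of_mem a hx)
    exact ⟨b :: l', .cons hb hl'⟩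

theorem List.Forall₂.exists_of_mem_right {α β : Type*} {R : α → β → Prop} {b : β} :
    ∀ {l₁ : List α} {l₂ : List β}, List.Forall₂ R l₁ l₂ → b ∈ l₂ → ∃ a ∈ l₁, R a b
  | _, _, .nil, hb => absurd hb not_mem_nil
  | a :: _, _, .cons hab h, hb => by
    rcases mem_cons.1 hb with rfl | hb
    · exact ⟨a, mem_cons_self, hab⟩
    · obtain ⟨a', ha', h'⟩ := h.exists_of_mem_right hb
      exact ⟨a', mem_cons_of_mem a ha', h'⟩

theorem exists_mem_mins_subset {α : Type} [Finite α] {S : Set (Set α)} {P : Set α} (hP : P ∈ S) :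
    ∃ P' ∈ mins S, P' ⊆ P := by
  obtain ⟨P', hle, hmin⟩ := exists_minimal_le_of_wellFoundedLT (· ∈ S) P hP
  exact ⟨P', ⟨hmin.prop, fun P'' hP'' hsub => hmin.eq_of_le hP'' hsub⟩, hle⟩

theorem wordsOf_mono {Q : Type} {π π' : List (Set Q)} (h : List.Forall₂ (· ⊆ ·) π π') :
    wordsOf π ⊆ wordsOf π' := by
  intro w hw
  induction h generalizing w with
  | nil => exact hw
  | cons hPP' _ ih =>
    obtain _ | ⟨hq, hw⟩ := hw
    exact .cons (hPP' hq) (ih hw)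

section HedgeAutomaton

variable {σ Q : Type} (A : HedgeAutomaton σ Q)

theorem postA_mono {a : σ} {π π' : List (Set Q)} (h : List.Forall₂ (· ⊆ ·) π π') :
    postA A a π ⊆ postA A a π' := fun _ ⟨L, hL, w, hwL, hw⟩ => ⟨L, hL, w, hwL, wordsOf_mono h hw⟩

theorem mem_wordsOf_pih_iff {ts : List (UTree σ)} {qs : List Q} :
    qs ∈ wordsOf (pih A ts) ↔ List.Forall₂ (fun t q => HEval A t q) ts qs := by
  simp only [wordsOf, pih, Set.mem_ofPred_eq, List.forall₂_map_right_iff]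
  exact ⟨List.Forall₂.flip, fun h => h.flip⟩

theorem Pt_node (a : σ) (ts : List (UTree σ)) :
    Pt A (.node a ts) = postA A a (pih A ts) := by
  ext q
  simp only [postA, Set.mem_ofPred_eq, Set.Nonempty, Set.mem_inter_iff, mem_wordsOf_pih_iff,
    List.forall₂_iff_zip]
  constructor
  · rintro ⟨hrule, hqs, hlen, hruns⟩
    exact ⟨_, hrule, _, hqs, hlen.symm, fun h => hruns _ h⟩
  · rintro ⟨L, hrule, qs, hqs, hlen, hruns⟩
    exact .node hrule hqs hlen.symm fun p hp => hruns hp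

theorem exists_Pt_subset_of_mem_minPostIter {M : Set (Set Q)}
    (hM : ∀ P ∈ M, ∃ t, Pt A t ⊆ P) : ∀ n, ∀ P ∈ minPostIter A n M, ∃ t, Pt A t ⊆ P
  | 0, P, hP => hM P hP.1
  | n + 1, P, hP => by
    obtain ⟨a, π, hπ, rfl⟩ | hP := hP.1
    · obtain ⟨ts, hts⟩ := List.exists_forall₂_of_forall_exists fun P hP =>
        exists_Pt_subset_of_mem_minPostIter hM n P (hπ P hP)
      refine ⟨.node a ts, (Pt_node A a ts).trans_subset (postA_mono A ?_)⟩
      simpa only [pih, List.forall₂_map_left_iff] using hts.flip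
    · exact exists_Pt_subset_of_mem_minPostIter hM n P hP

variable [Finite Q]

theorem exists_mem_minPostIter_succ_subset {M : Set (Set Q)} {n : ℕ} {P : Set Q}
    (hP : P ∈ minPostIter A n M) : ∃ P' ∈ minPostIter A (n + 1) M, P' ⊆ P :=
  exists_mem_mins_subset (Or.inr hP)

theorem exists_mem_minPostIter_subset_of_le {M : Set (Set Q)} {m n : ℕ} (hmn : m ≤ n)
    {P : Set Q} (hP : P ∈ minPostIter A m M) : ∃ P' ∈ minPostIter A n M, P' ⊆ P := by
  induction n, hmn using Nat.le_induction with
  | base => exact ⟨P, hP, subset_rfl⟩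
  | succ n _ ih =>
    obtain ⟨P', hP', hP'P⟩ := ih
    obtain ⟨P'', hP'', hP''P'⟩ := exists_mem_minPostIter_succ_subset A hP'
    exact ⟨P'', hP'', hP''P'.trans hP'P⟩

theorem exists_mem_minPostIter_subset_Pt_node {M : Set (Set Q)} {n : ℕ} {a : σ}
    {ts : List (UTree σ)} (hts : ∀ t ∈ ts, ∃ P ∈ minPostIter A n M, P ⊆ Pt A t) :
    ∃ P ∈ minPostIter A (n + 1) M, P ⊆ Pt A (.node a ts) := by
  obtain ⟨π, hπ⟩ := List.exists_forall₂_of_forall_exists hts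
  have hπn : ∀ P ∈ π, P ∈ minPostIter A n M := fun P hP => by
    obtain ⟨_, _, hP, _⟩ := hπ.exists_of_mem_right hP
    exact hP
  have hπts : List.Forall₂ (· ⊆ ·) π (pih A ts) := by
    simpa only [pih, List.forall₂_map_right_iff] using (hπ.imp fun _ _ h => h.2).flip
  obtain ⟨P, hP, hPpost⟩ := exists_mem_mins_subset
    (S := postSet A (minPostIter A n M)) (Or.inl ⟨a, π, hπn, rfl⟩)
  exact ⟨P, hP, hPpost.trans ((postA_mono A hπts).trans (Pt_node A a ts).symm.subset)⟩

theorem eventually_exists_mem_minPostIter_subset_Pt (M : Set (Set Q)) :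
    ∀ t : UTree σ, ∀ᶠ n in Filter.atTop, ∃ P ∈ minPostIter A n M, P ⊆ Pt A t
  | .node a ts => by
    have hchildren : ∀ᶠ n in Filter.atTop, ∀ t ∈ ts, ∃ P ∈ minPostIter A n M, P ⊆ Pt A t :=
      (Filter.eventually_all_finite ts.finite_toSet).2 fun t ht =>
        eventually_exists_mem_minPostIter_subset_Pt M t
    obtain ⟨n, hn⟩ := Filter.eventually_atTop.1 hchildren
    refine Filter.eventually_atTop.2 ⟨n + 1, fun m hm => ?_⟩
    obtain ⟨P, hP, hPt⟩ := exists_mem_minPostIter_subset_Pt_node A (hn n le_rfl) (a := a)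
    obtain ⟨P', hP', hP'P⟩ := exists_mem_minPostIter_subset_of_le A hm hP
    exact ⟨P', hP', hP'P.trans hPt⟩
decreasing_by have := List.sizeOf_lt_of_mem ht; simp only [UTree.node.sizeOf_spec]; omega

end HedgeAutomaton

theorem universal_iff_minPostStar_general {σ Q : Type} [Fintype Q]
    (A : HedgeAutomaton σ Q) :
    universal A ↔ ∀ P ∈ minPostStar A (∅ : Set (Set Q)), P ∩ A.final ≠ ∅ := by
  simp only [minPostStar, Set.mem_iUnion, ← Set.nonempty_iff_ne_empty]
  constructor
  · rintro hA P ⟨n, hP⟩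
    obtain ⟨t, htP⟩ := exists_Pt_subset_of_mem_minPostIter A (fun _ h => h.elim) n P hP
    obtain ⟨q, hq, hqt⟩ := hA t
    exact ⟨q, htP hqt, hq⟩
  · intro h t
    obtain ⟨n, P, hP, hPt⟩ := (eventually_exists_mem_minPostIter_subset_Pt A ∅ t).exists
    obtain ⟨q, hqP, hq⟩ := h P ⟨n, hP⟩
    exact ⟨q, hq, hPt hqP⟩

/-- Proposition 2: `A` is universal iff every macrostate
`P ∈ MinPost*(∅)` satisfies `P ∩ Q_f ≠ ∅`. -/
theorem universal_iff_minPostStar {σ Q : Type} [Fintype σ] [Fintype Q]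
    (A : HedgeAutomaton σ Q) (hfin : A.rules.Finite) (hreg : RegularHA A) :
    universal A ↔ ∀ P ∈ minPostStar A (∅ : Set (Set Q)), P ∩ A.final ≠ ∅ :=
  universal_iff_minPostStar_general A
end

section
/- Let A be a VPA over Σ, u a nonempty proper prefix of the linearization of some tree, and h a hedge over Σ. Then Safe(u[h]) = Safe(u) and LSafe(u[h]) = LSafe(u). -/
/-- A visibly pushdown automaton over `σ` (calls `Sum.inl a`, returns `Sum.inr a`):
states `Q`, stack alphabet `Γ`, initial and final states, push rules
`q –a:γ→ q'` (for `a ∈ Σ`) and pop rules `q –ā:γ→ q'` (for `ā ∈ Σ̄`). -/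
structure VPA (σ Q Γ : Type) where
  init : Set Q
  final : Set Q
  push : Q → σ → Γ → Q → Prop
  pop : Q → σ → Γ → Q → Prop

namespace VPA

/-- One step between configurations (a configuration is a pair `(q, σ) ∈ Q × Γ*`). -/
def Step {σ Q Γ : Type} (A : VPA σ Q Γ) :
    (Q × List Γ) → (σ ⊕ σ) → (Q × List Γ) → Prop
  | c, Sum.inl a, c' => ∃ γ, A.push c.1 a γ c'.1 ∧ c'.2 = γ :: c.2
  | c, Sum.inr a, c' => ∃ γ, A.pop c.1 a γ c'.1 ∧ c.2 = γ :: c'.2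

/-- Extension of `Step` to words over `σ ⊕ σ`. -/
def Steps {σ Q Γ : Type} (A : VPA σ Q Γ) :
    (Q × List Γ) → List (σ ⊕ σ) → (Q × List Γ) → Prop
  | c, [], c' => c = c'
  | c, x :: w, c'' => ∃ c', A.Step c x c' ∧ A.Steps c' w c''

/-- A word is accepted if it leads from some initial configuration `(q_i, ε)` to
some final configuration `(q_f, ε)`. -/
def AcceptsWord {σ Q Γ : Type} (A : VPA σ Q Γ) (w : List (σ ⊕ σ)) : Prop :=
  ∃ qi ∈ A.init, ∃ qf ∈ A.final, A.Steps (qi, []) w (qf, [])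

/-- A tree is accepted if its linearization is. -/
def AcceptsTree {σ Q Γ : Type} (A : VPA σ Q Γ) (t : UTree σ) : Prop :=
  A.AcceptsWord t.lin

end VPA

/-- `Safe A u`: the sets of configurations that are safe for `u`. -/
def Safe {σ Q Γ : Type} (A : VPA σ Q Γ) (u : List (σ ⊕ σ)) :
    Set (Set (Q × List Γ)) :=
  {C | ∀ v : List (σ ⊕ σ), (∃ t : UTree σ, u ++ v = t.lin) →
        ∃ c ∈ C, ∃ p ∈ A.final, A.Steps c v (p, [])}

/-- `LSafe A u`: the sets of configurations that are leaf-safe for `u`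
(only continuations starting with a closing tag are considered). -/
def LSafe {σ Q Γ : Type} (A : VPA σ Q Γ) (u : List (σ ⊕ σ)) :
    Set (Set (Q × List Γ)) :=
  {C | ∀ (b : σ) (v' : List (σ ⊕ σ)), (∃ t : UTree σ, u ++ (Sum.inr b :: v') = t.lin) →
        ∃ c ∈ C, ∃ p ∈ A.final, A.Steps c (Sum.inr b :: v') (p, [])}

/-- `A` is `u`-universal: every tree whose linearization starts with `u` is accepted. -/
def uUniversalV {σ Q Γ : Type} (A : VPA σ Q Γ) (u : List (σ ⊕ σ)) : Prop :=
  ∀ t : UTree σ, u <+: t.lin → A.AcceptsTree t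

/-! Read a word left to right, keeping the stack of pending opening tags
(`tagStack`). Hedge linearizations are exactly the words that leave every stack unchanged, and a
tree linearization is `a w ā` with `w` a hedge linearization. So after a nonempty proper prefix
`u` of a tree linearization, inserting `[h]` changes neither the stack nor the fact that `u` is
not yet a tree: `u [h] v` is a tree linearization iff `u v` is. `Safe` and `LSafe` only depend on
this set of continuations `v`. -/

theorem UTree.lin_node {σ : Type} (a : σ) (ts : List (UTree σ)) :
    (UTree.node a ts).lin = Sum.inl a :: (linH ts ++ [Sum.inr a]) := by
  rw [UTree.lin, linH, List.attach_map_val]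

theorem linH_cons {σ : Type} (t : UTree σ) (h : List (UTree σ)) :
    linH (t :: h) = t.lin ++ linH h := by
  simp [linH]

section TagStack

variable {σ : Type} [DecidableEq σ]

/-- The pending opening tags, innermost first, after reading a word from a given stack;
`none` once a closing tag does not match the innermost pending one. -/
def tagStack : List (σ ⊕ σ) → List σ → Option (List σ)
  | [], s => some s
  | Sum.inl a :: w, s => tagStack w (a :: s)
  | Sum.inr _ :: _, [] => none
  | Sum.inr a :: w, b :: s => if a = b then tagStack w s else none

theorem tagStack_append (x y : List (σ ⊕ σ)) (s : List σ) :
    tagStack (x ++ y) s = (tagStack x s).bind (tagStack y) := by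
  induction x generalizing s with
  | nil => rfl
  | cons c x ih =>
    match c, s with
    | Sum.inl a, s => exact ih _
    | Sum.inr a, [] => rfl
    | Sum.inr a, b :: s =>
      simp only [List.cons_append, tagStack]
      split_ifs
      · exact ih s
      · rfl

theorem tagStack_append_stack {w : List (σ ⊕ σ)} {s r : List σ} (hw : tagStack w s = some r)
    (t : List σ) : tagStack w (s ++ t) = some (r ++ t) := by
  induction w generalizing s with
  | nil => cases hw; rfl
  | cons c w ih =>
    match c, s with
    | Sum.inl a, s => exact ih (s := a :: s) hw
    | Sum.inr a, [] => cases hw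
    | Sum.inr a, b :: s =>
      simp only [List.cons_append, tagStack] at hw ⊢
      split_ifs at hw ⊢
      exact ih hw

theorem tagStack_linH_of_forall {h : List (UTree σ)}
    (H : ∀ t ∈ h, ∀ s, tagStack t.lin s = some s) (s : List σ) :
    tagStack (linH h) s = some s := by
  induction h generalizing s with
  | nil => rfl
  | cons t h ih =>
    rw [linH_cons, tagStack_append, H t List.mem_cons_self, Option.bind_some,
      ih fun t ht => H t (List.mem_cons_of_mem _ ht)]

theorem tagStack_lin : ∀ (t : UTree σ) (s : List σ), tagStack t.lin s = some s
  | .node a ts, s => by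
    rw [UTree.lin_node, tagStack, tagStack_append,
      tagStack_linH_of_forall fun t _ => tagStack_lin t]
    simp [tagStack]

theorem tagStack_linH (h : List (UTree σ)) (s : List σ) : tagStack (linH h) s = some s :=
  tagStack_linH_of_forall (fun t _ => tagStack_lin t) s

theorem exists_split_of_tagStack_cons :
    ∀ {w : List (σ ⊕ σ)} {a : σ} {s : List σ}, tagStack w (a :: s) = some [] →
      ∃ w₁ w₂, w = w₁ ++ Sum.inr a :: w₂ ∧ tagStack w₁ [] = some [] ∧ tagStack w₂ s = some []
  | [], _, _, hw => by cases hw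
  | Sum.inr c :: w, a, s, hw => by
    simp only [tagStack] at hw
    split_ifs at hw with hca
    exact ⟨[], w, by rw [hca]; rfl, rfl, hw⟩
  | Sum.inl b :: w, a, s, hw => by
    obtain ⟨x₁, x₂, rfl, hx₁, hx₂⟩ := exists_split_of_tagStack_cons (w := w) hw
    obtain ⟨y₁, y₂, rfl, hy₁, hy₂⟩ := exists_split_of_tagStack_cons hx₂
    refine ⟨Sum.inl b :: (x₁ ++ Sum.inr b :: y₁), y₂, by simp, ?_, hy₂⟩
    have hx₁b : tagStack x₁ [b] = some [b] := tagStack_append_stack hx₁ [b]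
    simp [tagStack, tagStack_append, hx₁b, hy₁]
termination_by w => w.length

theorem exists_linH_of_tagStack :
    ∀ {w : List (σ ⊕ σ)}, tagStack w [] = some [] → ∃ h : List (UTree σ), w = linH h
  | [], _ => ⟨[], rfl⟩
  | Sum.inr _ :: _, hw => by cases hw
  | Sum.inl a :: w, hw => by
    obtain ⟨w₁, w₂, rfl, hw₁, hw₂⟩ := exists_split_of_tagStack_cons (w := w) hw
    obtain ⟨h₁, rfl⟩ := exists_linH_of_tagStack hw₁
    obtain ⟨h₂, rfl⟩ := exists_linH_of_tagStack hw₂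
    exact ⟨UTree.node a h₁ :: h₂, by simp [linH_cons, UTree.lin_node]⟩
termination_by w => w.length

theorem exists_lin_eq_inl_cons_iff (a : σ) (x : List (σ ⊕ σ)) :
    (∃ t : UTree σ, Sum.inl a :: x = t.lin) ↔
      ∃ y, x = y ++ [Sum.inr a] ∧ tagStack y [] = some [] := by
  constructor
  · rintro ⟨⟨b, ts⟩, ht⟩
    rw [UTree.lin_node, List.cons.injEq, Sum.inl.injEq] at ht
    obtain ⟨rfl, rfl⟩ := ht
    exact ⟨linH ts, rfl, tagStack_linH ts []⟩
  · rintro ⟨y, rfl, hy⟩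
    obtain ⟨ts, rfl⟩ := exists_linH_of_tagStack hy
    exact ⟨.node a ts, (UTree.lin_node a ts).symm⟩

theorem tagStack_append_linH_append (x : List (σ ⊕ σ)) (h : List (UTree σ))
    (y : List (σ ⊕ σ)) (s : List σ) : tagStack (x ++ linH h ++ y) s = tagStack (x ++ y) s := by
  simp only [tagStack_append, Option.bind_assoc, tagStack_linH, Option.bind_some]

theorem not_exists_concat_inr_of_tagStack {x : List (σ ⊕ σ)} {a : σ}
    (hx : tagStack x [a] ≠ some []) :
    ¬ ∃ y, x = y ++ [Sum.inr a] ∧ tagStack y [] = some [] := by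
  rintro ⟨y, rfl, hy⟩
  have hya : tagStack y [a] = some [a] := tagStack_append_stack hy [a]
  simp [tagStack_append, hya, tagStack] at hx

end TagStack

theorem exists_lin_append_linH_append_iff {σ : Type} {u : List (σ ⊕ σ)} (hu : u ≠ [])
    (hpre : ProperPrefix u) (h : List (UTree σ)) (v : List (σ ⊕ σ)) :
    (∃ t : UTree σ, u ++ linH h ++ v = t.lin) ↔ ∃ t : UTree σ, u ++ v = t.lin := by
  classical
  obtain ⟨⟨a, ts⟩, v₀, hv₀, ht₀⟩ := hpre
  obtain ⟨c, u₁, rfl⟩ := List.exists_cons_of_ne_nil hu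
  obtain ⟨v₀, b, rfl⟩ := (List.eq_nil_or_concat v₀).resolve_left hv₀
  obtain ⟨rfl, hu₁, -⟩ : c = Sum.inl a ∧ u₁ ++ v₀ = linH ts ∧ b = Sum.inr a := by
    simpa [UTree.lin_node, ← List.append_assoc] using ht₀
  have hu₁a : tagStack u₁ [a] ≠ some [] := by
    obtain ⟨r, hr, -⟩ := Option.bind_eq_some_iff.mp
      (tagStack_append u₁ v₀ [] ▸ hu₁ ▸ tagStack_linH ts [])
    have hra : tagStack u₁ [a] = some (r ++ [a]) := tagStack_append_stack hr [a]
    simp [hra]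
  simp only [List.cons_append, exists_lin_eq_inl_cons_iff]
  rcases List.eq_nil_or_concat v with rfl | ⟨v, b, rfl⟩
  · simp only [List.append_nil]
    have hlin : tagStack (u₁ ++ linH h) [a] = tagStack u₁ [a] := by
      simpa using tagStack_append_linH_append u₁ h [] [a]
    exact iff_of_false (not_exists_concat_inr_of_tagStack (hlin ▸ hu₁a))
      (not_exists_concat_inr_of_tagStack hu₁a)
  · simp [← List.append_assoc, tagStack_append_linH_append]

theorem safe_invariant_by_hedge_general {σ Q Γ : Type}
    (A : VPA σ Q Γ) (u : List (σ ⊕ σ)) (hu : u ≠ []) (hpre : ProperPrefix u)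
    (h : List (UTree σ)) :
    Safe A (u ++ linH h) = Safe A u ∧ LSafe A (u ++ linH h) = LSafe A u := by
  simp only [Safe, LSafe, exists_lin_append_linH_append_iff hu hpre h, and_self]

/-- Lemma 10: `Safe(u[h]) = Safe(u)` and `LSafe(u[h]) = LSafe(u)`
for every hedge `h`. -/
theorem safe_invariant_by_hedge {σ Q Γ : Type} [Fintype σ] [Fintype Q] [Fintype Γ]
    (A : VPA σ Q Γ) (u : List (σ ⊕ σ)) (hu : u ≠ []) (hpre : ProperPrefix u)
    (h : List (UTree σ)) :
    Safe A (u ++ linH h) = Safe A u ∧ LSafe A (u ++ linH h) = LSafe A u :=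
  safe_invariant_by_hedge_general A u hu hpre h
end
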